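/- Let i : ℕ → {0,1} be a sequence containing infinitely many zeros and infinitely many ones. Then the diameters of the nested barycentric triangles for the triple (e,(12),(12)) tend to zero: diam(Γ_{(e,12,12)}(i₁,…,iₙ)) → 0 as n → ∞. In particular the intersection over all n of these triangles is a single point. -/

import Mathlib

/-! If `p₀ p₁ p₂` are the vertices of the triangle at level `n`, those at level `n + 1` are
`p₂ p₁ m` for the digit `0` and `p₁ p₀ m` for the digit `1`, where `m` is the midpoint of
`p₀ p₂`; so the triangles are nested. A single digit need not shrink the triangle, but a `1`
followed by a `0` produces `m p₀ (midpoint p₁ m)`, of diameter at most `3/4` of the old one.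
Infinitely many zeros and ones force infinitely many such pairs, so the decreasing diameters
tend to `0`, and nested compact sets whose diameters tend to `0` meet in exactly one point. -/

open Matrix MeasureTheory Filter

noncomputable section

/-- A point of ℝ² with the Euclidean metric. -/
def euclPt (x y : ℝ) : EuclideanSpace ℝ (Fin 2) :=
  (WithLp.equiv 2 (Fin 2 → ℝ)).symm ![x, y]

/-- Projection π(a,b,c) = (b/a, c/a), landing in Euclidean ℝ². -/
def projE (v : Fin 3 → ℝ) : EuclideanSpace ℝ (Fin 2) := euclPt (v 1 / v 0) (v 2 / v 0)

def Vmat : Matrix (Fin 3) (Fin 3) ℝ := !![1,1,1; 0,1,1; 0,0,1]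

def prodSeq (C : Fin 2 → Matrix (Fin 3) (Fin 3) ℝ) (i : ℕ → Fin 2) :
    ℕ → Matrix (Fin 3) (Fin 3) ℝ
  | 0 => 1
  | n + 1 => prodSeq C i n * C (i (n + 1))

/-- The subtriangle: convex hull of the π-images of the columns of V·C_{i₁}⋯C_{iₙ}. -/
def subTriE (C : Fin 2 → Matrix (Fin 3) (Fin 3) ℝ) (i : ℕ → Fin 2) (n : ℕ) :
    Set (EuclideanSpace ℝ (Fin 2)) :=
  convexHull ℝ (Set.range fun j : Fin 3 => projE fun k => (Vmat * prodSeq C i n) k j)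

/-- The pair of barycentric matrices for this TRIP triple. -/
def Ge1212 : Fin 2 → Matrix (Fin 3) (Fin 3) ℝ :=
  ![!![0,0,1/2; 0,1,0; 1,0,1/2], !![0,1,1/2; 1,0,0; 0,0,1/2]]

section TriangleSubdivision

variable {E : Type*}

def triStep [AddCommGroup E] [Module ℝ E] : Fin 2 → (Fin 3 → E) → Fin 3 → E :=
  ![fun p => ![p 2, p 1, midpoint ℝ (p 0) (p 2)], fun p => ![p 1, p 0, midpoint ℝ (p 0) (p 2)]]

theorem convexHull_range_triStep_subset [AddCommGroup E] [Module ℝ E] (b : Fin 2)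
    (p : Fin 3 → E) :
    convexHull ℝ (Set.range (triStep b p)) ⊆ convexHull ℝ (Set.range p) := by
  have hp : ∀ j, p j ∈ convexHull ℝ (Set.range p) := fun j =>
    subset_convexHull ℝ _ ⟨j, rfl⟩
  have hmid : midpoint ℝ (p 0) (p 2) ∈ convexHull ℝ (Set.range p) :=
    (convex_convexHull ℝ _).segment_subset (hp 0) (hp 2) (midpoint_mem_segment _ _)
  refine convexHull_min ?_ (convex_convexHull ℝ _)
  rintro _ ⟨j, rfl⟩
  fin_cases b <;> fin_cases j <;> simp [triStep, hp, hmid]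

theorem diam_range_fin_three_le [PseudoMetricSpace E] {p : Fin 3 → E} {r : ℝ} (hr : 0 ≤ r)
    (h01 : dist (p 0) (p 1) ≤ r) (h02 : dist (p 0) (p 2) ≤ r) (h12 : dist (p 1) (p 2) ≤ r) :
    Metric.diam (Set.range p) ≤ r := by
  refine Metric.diam_le_of_forall_dist_le hr ?_
  rintro _ ⟨j, rfl⟩ _ ⟨k, rfl⟩
  fin_cases j <;> fin_cases k <;> simp only [Fin.zero_eta, Fin.mk_one, Fin.reduceFinMk] <;>
    first | simp [hr] | assumption | (rw [dist_comm]; assumption)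

theorem dist_midpoint_le [NormedAddCommGroup E] [NormedSpace ℝ E] (x y z : E) :
    dist x (midpoint ℝ y z) ≤ (dist x y + dist x z) / 2 := by
  simpa using dist_midpoint_midpoint_le x x y z

theorem diam_convexHull_range_triStep_zero_one_le [NormedAddCommGroup E] [NormedSpace ℝ E]
    (p : Fin 3 → E) :
    Metric.diam (convexHull ℝ (Set.range (triStep 0 (triStep 1 p)))) ≤
      3 / 4 * Metric.diam (convexHull ℝ (Set.range p)) := by
  set T := convexHull ℝ (Set.range p)
  set d := Metric.diam T
  have hT : Bornology.IsBounded T :=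
    ((Set.finite_range p).isCompact_convexHull (𝕜 := ℝ)).isBounded
  have hp : ∀ j, p j ∈ T := fun j => subset_convexHull ℝ _ ⟨j, rfl⟩
  set m := midpoint ℝ (p 0) (p 2)
  have hm : m ∈ T :=
    (convex_convexHull ℝ _).segment_subset (hp 0) (hp 2) (midpoint_mem_segment _ _)
  have hdist : ∀ {x y}, x ∈ T → y ∈ T → dist x y ≤ d := Metric.dist_le_diam_of_mem hT
  have h0m : dist (p 0) m ≤ d / 2 := by
    have := hdist (hp 0) (hp 2)
    simp only [m, dist_left_midpoint, Real.norm_ofNat]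
    linarith
  have h1m : dist (p 1) m ≤ d := hdist (hp 1) hm
  have h01 : dist (p 0) (p 1) ≤ d := hdist (hp 0) (hp 1)
  have hd : 0 ≤ d := Metric.diam_nonneg
  have hstep : triStep 0 (triStep 1 p) = ![m, p 0, midpoint ℝ (p 1) m] := by
    ext j; fin_cases j <;> rfl
  rw [hstep, convexHull_diam]
  refine diam_range_fin_three_le (by positivity) ?_ ?_ ?_
  · show dist m (p 0) ≤ _
    rw [dist_comm]; linarith
  · show dist m (midpoint ℝ (p 1) m) ≤ _
    rw [dist_right_midpoint, Real.norm_ofNat]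
    linarith
  · show dist (p 0) (midpoint ℝ (p 1) m) ≤ _
    linarith [dist_midpoint_le (p 0) (p 1) m]

end TriangleSubdivision

theorem Set.Infinite.frequently_and_not_succ {P : ℕ → Prop} (hP : {n | P n}.Infinite)
    (hnP : {n | ¬P n}.Infinite) : ∃ᶠ n in atTop, P n ∧ ¬P (n + 1) := by
  rw [frequently_atTop]
  intro N
  by_contra! hstable
  obtain ⟨m, hm, hNm⟩ := hP.exists_gt N
  have hall : ∀ k, m ≤ k → P k := fun k hk =>
    Nat.le_induction hm (fun k hmk hk => hstable k (by omega) hk) k hk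
  obtain ⟨k, hk, hmk⟩ := hnP.exists_gt m
  exact hk (hall k hmk.le)

theorem tendsto_zero_of_antitone_of_frequently_le_mul {a : ℕ → ℝ} {c : ℝ} (ha : Antitone a)
    (ha0 : ∀ n, 0 ≤ a n) (hc : c < 1) (k : ℕ) (h : ∃ᶠ n in atTop, a (n + k) ≤ c * a n) :
    Tendsto a atTop (nhds 0) := by
  have hbdd : BddBelow (Set.range a) := ⟨0, by rintro _ ⟨n, rfl⟩; exact ha0 n⟩
  set L := ⨅ n, a n
  have hlim : Tendsto a atTop (nhds L) := tendsto_atTop_ciInf ha hbdd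
  have hL0 : 0 ≤ L := le_ciInf ha0
  have hLc : L ≤ c * L := by
    by_contra! hlt
    have hev : ∀ᶠ n in atTop, c * a n < L := (hlim.const_mul c).eventually (gt_mem_nhds hlt)
    obtain ⟨n, hn, hn'⟩ := (h.and_eventually hev).exists
    linarith [ciInf_le hbdd (n + k)]
  have hL : L = 0 := by nlinarith
  rwa [hL] at hlim

theorem exists_iInter_eq_singleton_of_tendsto_diam {α : Type*} [MetricSpace α]
    {s : ℕ → Set α} (hanti : Antitone s) (hcpt : ∀ n, IsCompact (s n))
    (hne : ∀ n, (s n).Nonempty)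
    (hdiam : Tendsto (fun n => Metric.diam (s n)) atTop (nhds 0)) : ∃ x, ⋂ n, s n = {x} := by
  obtain ⟨x, hx⟩ := IsCompact.nonempty_iInter_of_sequence_nonempty_isCompact_isClosed s
    (fun n => hanti n.le_succ) hne (hcpt 0) fun n => (hcpt n).isClosed
  refine ⟨x, Set.eq_singleton_iff_unique_mem.mpr ⟨hx, fun y hy => ?_⟩⟩
  have hle : ∀ n, dist y x ≤ Metric.diam (s n) := fun n =>
    Metric.dist_le_diam_of_mem (hcpt n).isBounded (Set.mem_iInter.1 hy n)
      (Set.mem_iInter.1 hx n)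
  exact dist_le_zero.mp (ge_of_tendsto' hdiam hle)

/-- `π` of the `j`-th column of `A`, provided its first entry is `1`. -/
def colPoint (A : Matrix (Fin 3) (Fin 3) ℝ) (j : Fin 3) : EuclideanSpace ℝ (Fin 2) :=
  euclPt (A 1 j) (A 2 j)

theorem colPoint_mul_Ge1212 (A : Matrix (Fin 3) (Fin 3) ℝ) (b : Fin 2) :
    colPoint (A * Ge1212 b) = triStep b (colPoint A) := by
  funext j
  ext k
  fin_cases b <;> fin_cases j <;> fin_cases k <;>
    simp [colPoint, triStep, euclPt, Matrix.mul_apply, Fin.sum_univ_three, Ge1212,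
      midpoint_eq_smul_add] <;>
    ring

theorem mul_Ge1212_row_zero {A : Matrix (Fin 3) (Fin 3) ℝ} (hA : ∀ j, A 0 j = 1) (b : Fin 2)
    (j : Fin 3) : (A * Ge1212 b) 0 j = 1 := by
  rw [Matrix.mul_apply, Fin.sum_univ_three, hA, hA, hA]
  fin_cases b <;> fin_cases j <;>
    norm_num [Ge1212, Matrix.vecHead, Matrix.vecTail, Matrix.cons_val_two]

theorem Vmat_mul_prodSeq_Ge1212_row_zero (i : ℕ → Fin 2) (n : ℕ) (j : Fin 3) :
    (Vmat * prodSeq Ge1212 i n) 0 j = 1 := by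
  induction n generalizing j with
  | zero => fin_cases j <;> simp [prodSeq, Vmat]
  | succ n ih => rw [prodSeq, ← Matrix.mul_assoc]; exact mul_Ge1212_row_zero ih _ j

theorem subTriE_Ge1212_eq (i : ℕ → Fin 2) (n : ℕ) :
    subTriE Ge1212 i n =
      convexHull ℝ (Set.range (colPoint (Vmat * prodSeq Ge1212 i n))) := by
  simp only [subTriE, projE, Vmat_mul_prodSeq_Ge1212_row_zero, div_one]
  rfl

theorem colPoint_Vmat_mul_prodSeq_succ (i : ℕ → Fin 2) (n : ℕ) :
    colPoint (Vmat * prodSeq Ge1212 i (n + 1)) =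
      triStep (i (n + 1)) (colPoint (Vmat * prodSeq Ge1212 i n)) := by
  rw [prodSeq, ← Matrix.mul_assoc, colPoint_mul_Ge1212]

theorem isCompact_subTriE_Ge1212 (i : ℕ → Fin 2) (n : ℕ) :
    IsCompact (subTriE Ge1212 i n) := by
  rw [subTriE_Ge1212_eq]
  exact (Set.finite_range _).isCompact_convexHull (𝕜 := ℝ)

theorem antitone_subTriE_Ge1212 (i : ℕ → Fin 2) : Antitone (subTriE Ge1212 i) := by
  refine antitone_nat_of_succ_le fun n => ?_
  rw [subTriE_Ge1212_eq, subTriE_Ge1212_eq, colPoint_Vmat_mul_prodSeq_succ]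
  exact convexHull_range_triStep_subset _ _

theorem diam_subTriE_Ge1212_add_two_le {i : ℕ → Fin 2} {n : ℕ} (h1 : i (n + 1) = 1)
    (h0 : i (n + 2) = 0) :
    Metric.diam (subTriE Ge1212 i (n + 2)) ≤ 3 / 4 * Metric.diam (subTriE Ge1212 i n) := by
  rw [subTriE_Ge1212_eq, subTriE_Ge1212_eq, colPoint_Vmat_mul_prodSeq_succ,
    colPoint_Vmat_mul_prodSeq_succ, h0, h1]
  exact diam_convexHull_range_triStep_zero_one_le _

/-- If the sequence contains infinitely many zeros and infinitely many ones, the diameters of the nested barycentric triangles of (e,12,12) tend to zero; in particular the intersection is a single point. -/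
theorem stmt8 (i : ℕ → Fin 2)
    (h0 : {n : ℕ | i n = 0}.Infinite) (h1 : {n : ℕ | i n = 1}.Infinite) :
    Tendsto (fun n => Metric.diam (subTriE Ge1212 i n)) atTop (nhds 0) ∧
    ∃ pt : EuclideanSpace ℝ (Fin 2), (⋂ n : ℕ, subTriE Ge1212 i (n + 1)) = {pt} := by
  have hpattern : ∃ᶠ n in atTop, i (n + 1) = 1 ∧ i (n + 2) = 0 := by
    have h := h1.frequently_and_not_succ (h0.mono fun n (hn : i n = 0) => by simp [hn])
    rw [← map_add_atTop_eq_nat 1, frequently_map] at h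
    exact h.mono fun n ⟨hn1, hn2⟩ => ⟨hn1, by lia⟩
  have hanti := antitone_subTriE_Ge1212 i
  have hdiam : Tendsto (fun n => Metric.diam (subTriE Ge1212 i n)) atTop (nhds 0) :=
    tendsto_zero_of_antitone_of_frequently_le_mul
      (fun m n hmn => Metric.diam_mono (hanti hmn) (isCompact_subTriE_Ge1212 i m).isBounded)
      (fun _ => Metric.diam_nonneg) (by norm_num : (3 / 4 : ℝ) < 1) 2
      (hpattern.mono fun n hn => diam_subTriE_Ge1212_add_two_le hn.1 hn.2)
  refine ⟨hdiam, exists_iInter_eq_singleton_of_tendsto_diam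
    (fun m n hmn => hanti (Nat.add_le_add_right hmn 1)) (fun n => isCompact_subTriE_Ge1212 i _)
    (fun n => ?_) (hdiam.comp (tendsto_add_atTop_nat 1))⟩
  rw [subTriE_Ge1212_eq]
  exact (Set.range_nonempty _).convexHull
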